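/- arXiv:1911.04301 — 6 statements merged into one kernel-verified Lean document; each statement's English description precedes it below -/
import Mathlib

section
/- Let a, b, ε, δ be real numbers with a ≥ 1, b > 0, 0 < ε < 1 and 0 < δ < 1, and let m be a real number satisfying m ≥ 2(a + log(1/δ))/ε + 2a − b + 1. Then the tail of the Beta(a, b+m) distribution beyond ε is less than δ; that is, ∫_ε^1 r^(a−1) (1−r)^(b+m−1) dr < δ · B(a, b+m). -/
/-!
Substituting `r = 2u` maps the tail `[ε, 1]` onto `[ε/2, 1/2]`, and there
`(1 - 2u)^q ≤ e^{-qε/2} (1 - u)^q` for `q = b + m - 1`, because `1 - 2u ≤ e^{-u}(1 - u)`. Hence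
the tail of the Beta integral is at most `2^a e^{-qε/2}` times the whole Beta integral, and the
lower bound on `m` makes this factor smaller than `δ`.
-/

open Real MeasureTheory ProbabilityTheory

lemma integral_rpow_mul_one_sub_rpow_eq_beta {α β : ℝ} (hα : 0 < α) (hβ : 0 < β) :
    ∫ r in (0 : ℝ)..1, r ^ (α - 1) * (1 - r) ^ (β - 1) = beta α β := by
  rw [beta_eq_betaIntegralReal α β hα hβ, Complex.betaIntegral,
    ← Complex.ofReal_re (∫ r in _.._, _), ← intervalIntegral.integral_ofReal]
  refine congrArg Complex.re (intervalIntegral.integral_congr fun r hr => ?_)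
  rw [Set.uIcc_of_le zero_le_one] at hr
  push_cast
  rw [Complex.ofReal_cpow hr.1, Complex.ofReal_cpow (sub_nonneg.2 hr.2)]
  push_cast
  ring

lemma one_sub_two_mul_le_exp_neg_mul_one_sub {x : ℝ} (hx : x ≤ 1) :
    1 - 2 * x ≤ exp (-x) * (1 - x) := by
  have h := add_one_le_exp (-x)
  nlinarith [mul_le_mul_of_nonneg_right h (sub_nonneg.2 hx), sq_nonneg x]

lemma rpow_two_mul_mul_one_sub_rpow_le (p : ℝ) {q t x : ℝ} (hq : 0 ≤ q) (ht : t ≤ x)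
    (hx : 0 ≤ x) (hx2 : 2 * x ≤ 1) :
    (2 * x) ^ p * (1 - 2 * x) ^ q ≤ 2 ^ p * exp (-(q * t)) * (x ^ p * (1 - x) ^ q) := by
  have hbase : 1 - 2 * x ≤ exp (-t) * (1 - x) :=
    (one_sub_two_mul_le_exp_neg_mul_one_sub (by linarith)).trans
      (mul_le_mul_of_nonneg_right (exp_le_exp.2 (neg_le_neg ht)) (by linarith))
  have hpow : (1 - 2 * x) ^ q ≤ exp (-(q * t)) * (1 - x) ^ q := by
    calc (1 - 2 * x) ^ q ≤ (exp (-t) * (1 - x)) ^ q := rpow_le_rpow (by linarith) hbase hq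
      _ = exp (-(q * t)) * (1 - x) ^ q := by
        rw [mul_rpow (exp_pos _).le (by linarith), ← exp_mul]
        ring_nf
  rw [mul_rpow zero_le_two hx, mul_assoc]
  calc 2 ^ p * (x ^ p * (1 - 2 * x) ^ q)
      ≤ 2 ^ p * (x ^ p * (exp (-(q * t)) * (1 - x) ^ q)) := by gcongr
    _ = 2 ^ p * exp (-(q * t)) * (x ^ p * (1 - x) ^ q) := by ring

lemma integral_rpow_mul_one_sub_rpow_le {p q ε : ℝ} (hp : 0 ≤ p) (hq : 0 ≤ q) (hε : 0 ≤ ε)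
    (hε1 : ε ≤ 1) :
    ∫ r in ε..1, r ^ p * (1 - r) ^ q ≤
      2 ^ (p + 1) * exp (-(q * (ε / 2))) * ∫ r in (0 : ℝ)..1, r ^ p * (1 - r) ^ q := by
  set g : ℝ → ℝ := fun r => r ^ p * (1 - r) ^ q
  have hg : Continuous g := by fun_prop (disch := assumption)
  set C := 2 ^ p * exp (-(q * (ε / 2)))
  have hsubst : ∫ r in ε..1, g r = 2 * ∫ u in ε / 2..1 / 2, g (2 * u) := by
    rw [intervalIntegral.integral_comp_mul_left g two_ne_zero, smul_eq_mul]
    ring_nf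
  have hdoubling : ∫ u in ε / 2..1 / 2, g (2 * u) ≤ ∫ u in ε / 2..1 / 2, C * g u :=
    intervalIntegral.integral_mono_on (by linarith)
      ((hg.comp (continuous_const_mul 2)).intervalIntegrable _ _)
      ((continuous_const.mul hg).intervalIntegrable _ _)
      fun u hu => rpow_two_mul_mul_one_sub_rpow_le p hq hu.1 (by linarith [hu.1])
        (by linarith [hu.2])
  have hsub : ∫ u in ε / 2..1 / 2, g u ≤ ∫ u in (0 : ℝ)..1, g u := by
    refine intervalIntegral.integral_mono_interval (by linarith) (by linarith) (by norm_num) ?_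
      (hg.intervalIntegrable _ _)
    filter_upwards [ae_restrict_mem measurableSet_Ioc] with r hr
    exact mul_nonneg (rpow_nonneg hr.1.le _) (rpow_nonneg (by linarith [hr.2]) _)
  have hC : 2 ^ (p + 1) * exp (-(q * (ε / 2))) = 2 * C := by
    rw [rpow_add_one two_ne_zero]
    ring
  rw [hC, hsubst, mul_assoc]
  gcongr
  rw [intervalIntegral.integral_const_mul] at hdoubling
  exact hdoubling.trans (by gcongr)

lemma two_rpow_mul_exp_lt {a q ε δ : ℝ} (ha : 0 < a) (hε : 0 < ε) (hδ : 0 < δ)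
    (hq : 2 * (a + log (1 / δ)) / ε + 2 * a ≤ q) :
    2 ^ a * exp (-(q * (ε / 2))) < δ := by
  have hqε : 2 * (a + log (1 / δ)) + 2 * a * ε ≤ q * ε := by
    have := mul_le_mul_of_nonneg_right hq hε.le
    rwa [add_mul, div_mul_cancel₀ _ hε.ne'] at this
  rw [one_div, log_inv] at hqε
  have hlog2 : a * log 2 < a := by nlinarith [log_two_lt_d9]
  rw [rpow_def_of_pos two_pos, ← exp_add, ← exp_log hδ, exp_lt_exp]
  nlinarith [mul_pos ha hε]

theorem beta_tail_lt_delta_general (a b ε δ m : ℝ) (ha : 1 ≤ a)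
    (hε : 0 < ε) (hε1 : ε < 1) (hδ : 0 < δ) (hδ1 : δ < 1)
    (hm : 2 * (a + Real.log (1 / δ)) / ε + 2 * a - b + 1 ≤ m) :
    ∫ r in ε..1, r ^ (a - 1) * (1 - r) ^ (b + m - 1) <
      δ * (Real.Gamma a * Real.Gamma (b + m) / Real.Gamma (a + b + m)) := by
  have hL : 0 < log (1 / δ) := log_pos (by rw [lt_div_iff₀ hδ]; linarith)
  have hq : 2 * (a + log (1 / δ)) / ε + 2 * a ≤ b + m - 1 := by linarith
  have hq0 : 0 ≤ b + m - 1 := le_trans (by positivity) hq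
  have hbeta := integral_rpow_mul_one_sub_rpow_eq_beta (α := a) (β := b + m) (by linarith)
    (by linarith)
  calc ∫ r in ε..1, r ^ (a - 1) * (1 - r) ^ (b + m - 1)
      ≤ 2 ^ a * exp (-((b + m - 1) * (ε / 2))) * beta a (b + m) := by
        have := integral_rpow_mul_one_sub_rpow_le (sub_nonneg.2 ha) hq0 hε.le hε1.le
        rwa [sub_add_cancel, hbeta] at this
    _ < δ * beta a (b + m) :=
        mul_lt_mul_of_pos_right (two_rpow_mul_exp_lt (by linarith) hε hδ hq)
          (beta_pos (by linarith) (by linarith))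
    _ = δ * (Gamma a * Gamma (b + m) / Gamma (a + b + m)) := by rw [beta, add_assoc]

/-- PAC-style bound for the β-Risk model: if `m ≥ 2(a + log(1/δ))/ε + 2a − b + 1`, then the
Beta(a, b+m) tail beyond ε is less than δ·B(a, b+m). -/
theorem beta_tail_lt_delta (a b ε δ m : ℝ) (ha : 1 ≤ a) (hb : 0 < b)
    (hε : 0 < ε) (hε1 : ε < 1) (hδ : 0 < δ) (hδ1 : δ < 1)
    (hm : 2 * (a + Real.log (1 / δ)) / ε + 2 * a - b + 1 ≤ m) :
    ∫ r in ε..1, r ^ (a - 1) * (1 - r) ^ (b + m - 1) <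
      δ * (Real.Gamma a * Real.Gamma (b + m) / Real.Gamma (a + b + m)) :=
  beta_tail_lt_delta_general a b ε δ m ha hε hε1 hδ hδ1 hm
end

section
/- Let a ≥ 1, c > 1 and λ be real numbers with 0 ≤ λ < c − 1. Then the exponential moment of the Beta(a, c) distribution satisfies (∫_0^1 e^(λ r) r^(a−1) (1−r)^(c−1) dr) / B(a, c) ≤ ((a + c − 1)/(c − 1 − λ))^a. -/
open Real MeasureTheory ProbabilityTheory Set

/-!
Since `e^(λr) (1 - r)^λ ≤ 1` on `[0, 1]`, the numerator is at most `B(a, c - λ)`, and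
`B(a, c - λ) / B(a, c) = (Γ(a + c) / Γ(c)) / (Γ(a + c - λ) / Γ(c - λ))`. Both Gamma ratios are
controlled by the log-convexity of `Γ`: a slope of `log Γ` over `[x, x + s]` lies between the
unit-step slopes `log (x - 1)` and `log (x + s - 1)` given by `Γ(y + 1) = y Γ(y)`.
-/

lemma slope_log_Gamma_add_one {y : ℝ} (hy : 0 < y) :
    slope (log ∘ Gamma) y (y + 1) = log y := by
  rw [slope_def_field, add_sub_cancel_left, div_one, Function.comp_apply, Function.comp_apply,
    Gamma_add_one hy.ne', log_mul hy.ne' (Gamma_pos_of_pos hy).ne', add_sub_cancel_right]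

lemma Gamma_add_div_Gamma_le {x s : ℝ} (hx : 0 < x) (hs : 1 ≤ s) :
    Gamma (x + s) / Gamma x ≤ (x + s - 1) ^ s := by
  have hy : 0 < x + s - 1 := by linarith
  have hslope : slope (log ∘ Gamma) (x + s) x ≤ slope (log ∘ Gamma) (x + s) (x + s - 1) :=
    convexOn_log_Gamma.slope_mono (by simp; linarith) ⟨hx, by simp; linarith⟩
      ⟨hy, by simp⟩ (by linarith)
  have hstep := slope_log_Gamma_add_one hy
  rw [sub_add_cancel, slope_comm] at hstep
  rw [hstep, slope_def_field, show x - (x + s) = -s by ring, Function.comp_apply,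
    Function.comp_apply, div_le_iff_of_neg (by linarith)] at hslope
  rw [← log_le_log_iff (by positivity) (by positivity), log_div (by positivity) (by positivity),
    log_rpow hy]
  linarith

lemma rpow_le_Gamma_add_div_Gamma {x s : ℝ} (hx : 1 < x) (hs : 0 < s) :
    (x - 1) ^ s ≤ Gamma (x + s) / Gamma x := by
  have hy : 0 < x - 1 := by linarith
  have hslope : slope (log ∘ Gamma) x (x - 1) ≤ slope (log ∘ Gamma) x (x + s) :=
    convexOn_log_Gamma.slope_mono (by simp; linarith) ⟨hy, by simp⟩
      ⟨by simp; linarith, by simp; linarith⟩ (by linarith)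
  have hstep := slope_log_Gamma_add_one hy
  rw [sub_add_cancel, slope_comm] at hstep
  rw [hstep, slope_def_field, add_sub_cancel_left, Function.comp_apply,
    Function.comp_apply, le_div_iff₀ hs] at hslope
  rw [← log_le_log_iff (by positivity) (by positivity), log_div (by positivity) (by positivity),
    log_rpow hy]
  linarith

lemma exp_mul_mul_one_sub_rpow_le_one {l x : ℝ} (hl : 0 ≤ l) (hx : x ≤ 1) :
    exp (l * x) * (1 - x) ^ l ≤ 1 := by
  have h : exp x * (1 - x) ≤ 1 := by
    calc exp x * (1 - x) ≤ exp x * exp (-x) := by gcongr; exact one_sub_le_exp_neg x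
      _ = 1 := by rw [← exp_add, add_neg_cancel, exp_zero]
  rw [mul_comm l, exp_mul, ← mul_rpow (exp_pos x).le (by linarith)]
  exact rpow_le_one (by nlinarith [exp_pos x]) h hl

lemma exp_mul_mul_one_sub_rpow_le {l c x : ℝ} (hl : 0 ≤ l) (hx : x < 1) :
    exp (l * x) * (1 - x) ^ (c - 1) ≤ (1 - x) ^ (c - l - 1) := by
  have hsplit : (1 - x) ^ (c - 1) = (1 - x) ^ l * (1 - x) ^ (c - l - 1) := by
    rw [← rpow_add (by linarith)]; ring_nf
  calc exp (l * x) * (1 - x) ^ (c - 1) = exp (l * x) * (1 - x) ^ l * (1 - x) ^ (c - l - 1) := by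
        rw [hsplit, mul_assoc]
    _ ≤ 1 * (1 - x) ^ (c - l - 1) := by
        gcongr
        exact exp_mul_mul_one_sub_rpow_le_one hl hx.le
    _ = (1 - x) ^ (c - l - 1) := one_mul _

lemma ofReal_rpow_mul_one_sub_rpow {u v x : ℝ} (hx0 : 0 ≤ x) (hx1 : x ≤ 1) :
    ((x ^ (u - 1) * (1 - x) ^ (v - 1) : ℝ) : ℂ) =
      (x : ℂ) ^ ((u : ℂ) - 1) * (1 - (x : ℂ)) ^ ((v : ℂ) - 1) := by
  rw [Complex.ofReal_mul, Complex.ofReal_cpow hx0, Complex.ofReal_cpow (by linarith)]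
  push_cast
  rfl

lemma intervalIntegrable_rpow_mul_one_sub_rpow {u v : ℝ} (hu : 0 < u) (hv : 0 < v) :
    IntervalIntegrable (fun x : ℝ ↦ x ^ (u - 1) * (1 - x) ^ (v - 1)) volume 0 1 := by
  have hC := Complex.betaIntegral_convergent (u := u) (v := v) (by simpa) (by simpa)
  rw [intervalIntegrable_iff_integrableOn_Ioc_of_le zero_le_one] at hC ⊢
  refine IntegrableOn.congr_fun hC.re (fun x hx ↦ ?_) measurableSet_Ioc
  rw [← ofReal_rpow_mul_one_sub_rpow hx.1.le hx.2, RCLike.re_to_complex, Complex.ofReal_re]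

lemma integral_rpow_mul_one_sub_rpow {u v : ℝ} (hu : 0 < u) (hv : 0 < v) :
    ∫ x in (0 : ℝ)..1, x ^ (u - 1) * (1 - x) ^ (v - 1) = beta u v := by
  rw [beta_eq_betaIntegralReal u v hu hv, Complex.betaIntegral,
    ← Complex.ofReal_re (∫ _ in _.._, _), ← intervalIntegral.integral_ofReal]
  congr 1
  refine intervalIntegral.integral_congr fun x hx ↦ ?_
  rw [uIcc_of_le zero_le_one] at hx
  exact ofReal_rpow_mul_one_sub_rpow hx.1 hx.2

lemma integral_exp_mul_rpow_mul_one_sub_rpow_le_beta {a c l : ℝ} (ha : 0 < a) (hl : 0 ≤ l)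
    (hlc : l < c) :
    ∫ r in (0 : ℝ)..1, exp (l * r) * r ^ (a - 1) * (1 - r) ^ (c - 1) ≤ beta a (c - l) := by
  rw [← integral_rpow_mul_one_sub_rpow ha (by linarith : 0 < c - l)]
  refine intervalIntegral.integral_mono_on_of_le_Ioo zero_le_one ?_
    (intervalIntegrable_rpow_mul_one_sub_rpow ha (by linarith)) fun x hx ↦ ?_
  · simpa only [mul_assoc] using
      (intervalIntegrable_rpow_mul_one_sub_rpow ha (by linarith : 0 < c)).continuousOn_mul
        (by fun_prop : Continuous fun r ↦ exp (l * r)).continuousOn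
  · calc exp (l * x) * x ^ (a - 1) * (1 - x) ^ (c - 1)
          = x ^ (a - 1) * (exp (l * x) * (1 - x) ^ (c - 1)) := by ring
      _ ≤ x ^ (a - 1) * (1 - x) ^ (c - l - 1) :=
          mul_le_mul_of_nonneg_left (exp_mul_mul_one_sub_rpow_le hl hx.2) (rpow_nonneg hx.1.le _)

lemma beta_sub_div_beta_le {a c l : ℝ} (ha : 1 ≤ a) (hc : 0 < c) (hl : l < c - 1) :
    beta a (c - l) / beta a c ≤ ((a + c - 1) / (c - 1 - l)) ^ a := by
  have hcl : 0 < c - 1 - l := by linarith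
  have hratio : beta a (c - l) / beta a c =
      (Gamma (a + c) / Gamma c) / (Gamma (a + (c - l)) / Gamma (c - l)) := by
    have := (Gamma_pos_of_pos (by linarith : 0 < a)).ne'
    have := (Gamma_pos_of_pos (by linarith : 0 < a + (c - l))).ne'
    simp only [beta]
    field_simp
  rw [hratio, div_rpow (by linarith) hcl.le]
  refine div_le_div₀ (rpow_nonneg (by linarith) a) ?_ (by positivity) ?_
  · simpa only [add_comm c a] using Gamma_add_div_Gamma_le hc ha
  · simpa only [add_comm (c - l) a, sub_right_comm c l 1] using
      rpow_le_Gamma_add_div_Gamma (x := c - l) (by linarith) (by linarith : 0 < a)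

theorem beta_exp_moment_le_general (a c l : ℝ) (ha : 1 ≤ a)
    (hl0 : 0 ≤ l) (hl : l < c - 1) :
    (∫ r in (0:ℝ)..1, Real.exp (l * r) * r ^ (a - 1) * (1 - r) ^ (c - 1)) /
        (Real.Gamma a * Real.Gamma c / Real.Gamma (a + c)) ≤
      ((a + c - 1) / (c - 1 - l)) ^ a := by
  have hc : 0 < c := by linarith
  calc _ ≤ beta a (c - l) / beta a c :=
        div_le_div_of_nonneg_right
          (integral_exp_mul_rpow_mul_one_sub_rpow_le_beta (by linarith) hl0 (by linarith))
          (beta_pos (by linarith) hc).le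
    _ ≤ _ := beta_sub_div_beta_le ha hc hl

/-- Moment bound for a Beta(a, c) distribution: for `a ≥ 1`, `c > 1` and `0 ≤ λ < c − 1`,
`(∫_0^1 e^(λ r) r^(a−1) (1−r)^(c−1) dr) / B(a, c) ≤ ((a + c − 1)/(c − 1 − λ))^a`. -/
theorem beta_exp_moment_le (a c l : ℝ) (ha : 1 ≤ a) (hc : 1 < c)
    (hl0 : 0 ≤ l) (hl : l < c - 1) :
    (∫ r in (0:ℝ)..1, Real.exp (l * r) * r ^ (a - 1) * (1 - r) ^ (c - 1)) /
        (Real.Gamma a * Real.Gamma c / Real.Gamma (a + c)) ≤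
      ((a + c - 1) / (c - 1 - l)) ^ a :=
  beta_exp_moment_le_general a c l ha hl0 hl
end

section
/- Let a > 0 be a real number and let g : ℝ → ℝ be continuous on [0,1] with g(r) ≥ 0 for all r ∈ [0,1] and g(0) > 0. For each natural number m define R(m) = (∫_0^1 r^a (1−r)^m g(r) dr) / (∫_0^1 r^(a−1) (1−r)^m g(r) dr). Then m · R(m) → a as m → ∞. -/
/-!
Laplace's method at the endpoint `r = 0`. Substituting `r = t / m`,
`m ^ b * ∫₀¹ r ^ (b - 1) (1 - r) ^ m g(r) dr = ∫₀ᵐ t ^ (b - 1) (1 - t / m) ^ m g(t / m) dt`,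
and since `(1 - t / m) ^ m ≤ e⁻ᵗ` with `(1 - t / m) ^ m → e⁻ᵗ`, dominated convergence sends this
to `g(0) Γ(b)`. With `b = a + 1` in the numerator and `b = a` in the denominator,
`m R(m) → Γ(a + 1) / Γ(a) = a`.
-/

open Real MeasureTheory Filter
open Set Topology

lemma div_mem_Icc_of_mem_Ioc {t c : ℝ} (ht : t ∈ Ioc 0 c) : t / c ∈ Icc (0 : ℝ) 1 :=
  ⟨div_nonneg ht.1.le (ht.1.trans_le ht.2).le, div_le_one_of_le₀ ht.2 (ht.1.trans_le ht.2).le⟩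

lemma integral_comp_div_mul_rpow (h : ℝ → ℝ) (b : ℝ) {c : ℝ} (hc : 0 < c) :
    ∫ t in (0 : ℝ)..c, h (t / c) * t ^ (b - 1) = c ^ b * ∫ r in (0 : ℝ)..1, h r * r ^ (b - 1) := by
  have hsubst :=
    intervalIntegral.integral_comp_div (a := 0) (b := c) (fun r => h r * r ^ (b - 1)) hc.ne'
  rw [zero_div, div_self hc.ne', smul_eq_mul] at hsubst
  calc ∫ t in (0 : ℝ)..c, h (t / c) * t ^ (b - 1)
      = ∫ t in (0 : ℝ)..c, c ^ (b - 1) * (h (t / c) * (t / c) ^ (b - 1)) := by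
        refine intervalIntegral.integral_congr fun t ht => ?_
        rw [uIcc_of_le hc.le] at ht
        have : c ^ (b - 1) ≠ 0 := (rpow_pos_of_pos hc _).ne'
        rw [div_rpow ht.1 hc.le]
        field_simp
    _ = c ^ b * ∫ r in (0 : ℝ)..1, h r * r ^ (b - 1) := by
        rw [intervalIntegral.integral_const_mul, hsubst, ← mul_assoc, ← rpow_add_one hc.ne',
          sub_add_cancel]

lemma norm_comp_div_mul_one_sub_div_pow_le {g : ℝ → ℝ} {C : ℝ}
    (hC : ∀ r ∈ Icc (0 : ℝ) 1, ‖g r‖ ≤ C) (b : ℝ) {m : ℕ} {t : ℝ} (ht : t ∈ Ioc 0 (m : ℝ)) :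
    ‖g (t / m) * (1 - t / m) ^ m * t ^ (b - 1)‖ ≤ C * (exp (-t) * t ^ (b - 1)) := by
  have hdiv := div_mem_Icc_of_mem_Ioc ht
  have hbase : 0 ≤ 1 - t / m := sub_nonneg.mpr hdiv.2
  rw [norm_mul, norm_mul, norm_pow, Real.norm_of_nonneg hbase,
    Real.norm_of_nonneg (rpow_nonneg ht.1.le _), mul_assoc]
  have ht_pow : 0 ≤ t ^ (b - 1) := rpow_nonneg ht.1.le _
  exact mul_le_mul (hC _ hdiv)
    (mul_le_mul_of_nonneg_right (one_sub_div_pow_le_exp_neg ht.2) ht_pow)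
    (mul_nonneg (pow_nonneg hbase _) ht_pow) ((norm_nonneg _).trans (hC _ hdiv))

lemma tendsto_comp_div_mul_one_sub_div_pow {g : ℝ → ℝ} (hg : ContinuousWithinAt g (Icc 0 1) 0)
    {t : ℝ} (ht : 0 < t) :
    Tendsto (fun m : ℕ => g (t / m) * (1 - t / m) ^ m) atTop (𝓝 (g 0 * exp (-t))) := by
  have hmem : ∀ᶠ m : ℕ in atTop, t ∈ Ioc 0 (m : ℝ) := by
    filter_upwards [eventually_ge_atTop ⌈t⌉₊] with m hm using ⟨ht, Nat.ceil_le.mp hm⟩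
  have hdiv : Tendsto (fun m : ℕ => t / m) atTop (𝓝[Icc 0 1] 0) :=
    tendsto_nhdsWithin_iff.mpr ⟨tendsto_const_div_atTop_nhds_zero_nat t,
      hmem.mono fun _ => div_mem_Icc_of_mem_Ioc⟩
  refine (hg.tendsto.comp hdiv).mul ?_
  simpa only [neg_div, ← sub_eq_add_neg] using tendsto_one_add_div_pow_exp (-t)

theorem tendsto_rpow_mul_integral_one_sub_pow {b : ℝ} (hb : 0 < b) {g : ℝ → ℝ}
    (hg : ContinuousOn g (Icc 0 1)) :
    Tendsto (fun m : ℕ => (m : ℝ) ^ b * ∫ r in (0 : ℝ)..1, r ^ (b - 1) * (1 - r) ^ m * g r)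
      atTop (𝓝 (g 0 * Gamma b)) := by
  obtain ⟨C, hC⟩ := isCompact_Icc.exists_bound_of_continuousOn hg
  let F : ℕ → ℝ → ℝ := fun m =>
    indicator (Ioc 0 (m : ℝ)) fun t => g (t / m) * (1 - t / m) ^ m * t ^ (b - 1)
  have hF_integral : ∀ᶠ m : ℕ in atTop, ∫ t in Ioi (0 : ℝ), F m t =
      (m : ℝ) ^ b * ∫ r in (0 : ℝ)..1, r ^ (b - 1) * (1 - r) ^ m * g r := by
    filter_upwards [eventually_gt_atTop 0] with m hm
    have hm' : (0 : ℝ) < m := Nat.cast_pos.mpr hm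
    rw [integral_indicator measurableSet_Ioc, Measure.restrict_restrict measurableSet_Ioc,
      inter_eq_self_of_subset_left Ioc_subset_Ioi_self, ← intervalIntegral.integral_of_le hm'.le,
      integral_comp_div_mul_rpow (fun r => g r * (1 - r) ^ m) b hm']
    congr 1
    exact intervalIntegral.integral_congr fun r _ => by ring
  have hF_meas : ∀ m : ℕ, AEStronglyMeasurable (F m) (volume.restrict (Ioi (0 : ℝ))) := by
    intro m
    refine (aestronglyMeasurable_indicator_iff measurableSet_Ioc).mpr
      (ContinuousOn.aestronglyMeasurable ?_ measurableSet_Ioc)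
    refine ((hg.comp (by fun_prop) fun _ => div_mem_Icc_of_mem_Ioc).mul (by fun_prop)).mul ?_
    exact continuousOn_id.rpow_const fun t ht => Or.inl ht.1.ne'
  have hF_le : ∀ m : ℕ, ∀ᵐ t ∂volume.restrict (Ioi (0 : ℝ)),
      ‖F m t‖ ≤ C * (exp (-t) * t ^ (b - 1)) := by
    intro m
    filter_upwards [ae_restrict_mem measurableSet_Ioi] with t ht
    by_cases htm : t ∈ Ioc 0 (m : ℝ)
    · simpa only [F, indicator_of_mem htm] using norm_comp_div_mul_one_sub_div_pow_le hC b htm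
    · simp only [F, indicator_of_notMem htm, norm_zero]
      exact mul_nonneg ((norm_nonneg _).trans (hC 0 (left_mem_Icc.mpr zero_le_one)))
        (mul_nonneg (exp_pos _).le (rpow_nonneg (le_of_lt ht) _))
  have hF_lim : ∀ᵐ t ∂volume.restrict (Ioi (0 : ℝ)),
      Tendsto (fun m => F m t) atTop (𝓝 (g 0 * exp (-t) * t ^ (b - 1))) := by
    filter_upwards [ae_restrict_mem measurableSet_Ioi] with t (ht : 0 < t)
    have hg0 := hg 0 (left_mem_Icc.mpr zero_le_one)
    refine ((tendsto_comp_div_mul_one_sub_div_pow hg0 ht).mul_const _).congr' ?_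
    filter_upwards [eventually_ge_atTop ⌈t⌉₊] with m hm
    have htm : t ∈ Ioc 0 (m : ℝ) := ⟨ht, Nat.ceil_le.mp hm⟩
    simp only [F, indicator_of_mem htm]
  have hDCT := tendsto_integral_of_dominated_convergence _ hF_meas
    ((GammaIntegral_convergent hb).const_mul C) hF_le hF_lim
  rw [Gamma_eq_integral hb, ← integral_const_mul]
  simp only [← mul_assoc]
  exact hDCT.congr' hF_integral

theorem erm_risk_asymptotic_general (a : ℝ) (ha : 0 < a) (g : ℝ → ℝ)
    (hg : ContinuousOn g (Set.Icc 0 1))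
    (hgpos : 0 < g 0) :
    Tendsto (fun m : ℕ => (m : ℝ) *
        ((∫ r in (0:ℝ)..1, r ^ a * (1 - r) ^ m * g r) /
          (∫ r in (0:ℝ)..1, r ^ (a - 1) * (1 - r) ^ m * g r)))
      atTop (nhds a) := by
  have hnum := tendsto_rpow_mul_integral_one_sub_pow (b := a + 1) (by linarith) hg
  have hden := tendsto_rpow_mul_integral_one_sub_pow ha hg
  rw [add_sub_cancel_right, Gamma_add_one ha.ne'] at hnum
  have hratio := hnum.div hden (mul_pos hgpos (Gamma_pos_of_pos ha)).ne'
  rw [show g 0 * (a * Gamma a) / (g 0 * Gamma a) = a by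
    field_simp [hgpos.ne', (Gamma_pos_of_pos ha).ne']] at hratio
  refine hratio.congr' ?_
  filter_upwards [eventually_gt_atTop 0] with m hm
  have hm' : (0 : ℝ) < m := Nat.cast_pos.mpr hm
  rw [Pi.div_apply, rpow_add_one hm'.ne', mul_assoc,
    mul_div_mul_left _ _ (rpow_pos_of_pos hm' a).ne', mul_div_assoc]

/-- Asymptotic ERM risk from power-law attunement: if the risk density is
`ρ(r) = r^(a−1) g(r)` with `g` continuous, nonnegative and `g(0) > 0`, then the expected
ERM risk `R(m)` satisfies `m · R(m) → a` as `m → ∞`. -/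
theorem erm_risk_asymptotic (a : ℝ) (ha : 0 < a) (g : ℝ → ℝ)
    (hg : ContinuousOn g (Set.Icc 0 1))
    (hg0 : ∀ r ∈ Set.Icc (0:ℝ) 1, 0 ≤ g r) (hgpos : 0 < g 0) :
    Tendsto (fun m : ℕ => (m : ℝ) *
        ((∫ r in (0:ℝ)..1, r ^ a * (1 - r) ^ m * g r) /
          (∫ r in (0:ℝ)..1, r ^ (a - 1) * (1 - r) ^ m * g r)))
      atTop (nhds a) :=
  erm_risk_asymptotic_general a ha g hg hgpos
end

section
/- Let a > 0 be a real number, N a natural number, and c_0, c_1, …, c_N nonnegative real numbers with c_0 > 0. For each natural number m ≥ 1 define R(m) = (∫_0^1 r^a (1−r)^m (Σ_{i=0}^N c_i r^i) dr) / (∫_0^1 r^(a−1) (1−r)^m (Σ_{i=0}^N c_i r^i) dr). Then there exists a constant C such that for all m ≥ 1, |R(m) − a/m| ≤ C/m². -/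
/-!
Write `B(x) = ∫₀¹ r^(x-1) (1-r)^m dr`, which is the Beta function `Β(x, m+1)`. Expanding the
polynomial weight, the denominator is `Q = Σ cᵢ B(a+i)` and the numerator `P = Σ cᵢ B(a+1+i)`.
The Gamma recurrence `(x+m+1) B(x+1) = x B(x)` rewrites each term of `m P - a Q` as
`i B(a+i) - (a+i+1) B(a+i+1)`; since `B` decreases under unit shifts of `x`, both pieces are
`O(B(a+1)) = O(B(a)/m)`, while `Q ≥ c₀ B(a)`. Hence `|P/Q - a/m| = |m P - a Q| / (m Q) = O(1/m²)`.
-/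

open Real MeasureTheory ProbabilityTheory

namespace ProbabilityTheory

lemma add_mul_beta_add_one_left {x y : ℝ} (hx : 0 < x) (hy : 0 < y) :
    (x + y) * beta (x + 1) y = x * beta x y := by
  have hxy : 0 < x + y := add_pos hx hy
  have hΓ : 0 < Gamma (x + y) := Gamma_pos_of_pos hxy
  rw [beta, beta, Gamma_add_one hx.ne', add_right_comm, Gamma_add_one hxy.ne']
  field_simp

lemma beta_add_one_left_le {x y : ℝ} (hx : 0 < x) (hy : 0 < y) :
    beta (x + 1) y ≤ beta x y := by
  have := add_mul_beta_add_one_left hx hy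
  nlinarith [beta_pos (add_pos hx one_pos) hy]

lemma beta_add_natCast_left_le {x y : ℝ} (hx : 0 < x) (hy : 0 < y) (n : ℕ) :
    beta (x + n) y ≤ beta x y := by
  induction n with
  | zero => simp
  | succ n ih =>
    push_cast
    rw [← add_assoc]
    exact (beta_add_one_left_le (by positivity) hy).trans ih

end ProbabilityTheory

lemma integral_rpow_mul_one_sub_pow {x : ℝ} (hx : 0 < x) (m : ℕ) :
    ∫ r in (0:ℝ)..1, r ^ (x - 1) * (1 - r) ^ m = beta x (m + 1) := by
  have hcast : ((∫ r in (0:ℝ)..1, r ^ (x - 1) * (1 - r) ^ m : ℝ) : ℂ) =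
      Complex.betaIntegral x (m + 1) := by
    rw [Complex.betaIntegral, ← intervalIntegral.integral_ofReal]
    refine intervalIntegral.integral_congr fun r hr => ?_
    rw [Set.uIcc_of_le zero_le_one] at hr
    simp [Complex.ofReal_cpow hr.1]
  rw [beta_eq_betaIntegralReal x (m + 1) hx (by positivity)]
  exact_mod_cast congrArg Complex.re hcast

lemma intervalIntegrable_rpow_mul_one_sub_pow {x : ℝ} (hx : 0 < x) (m : ℕ) :
    IntervalIntegrable (fun r : ℝ => r ^ (x - 1) * (1 - r) ^ m) volume 0 1 :=
  (intervalIntegral.intervalIntegrable_rpow' (by linarith)).mul_continuousOn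
    (by fun_prop)

lemma integral_rpow_mul_one_sub_pow_mul_sum {x : ℝ} (hx : 0 < x) (m N : ℕ) (c : ℕ → ℝ) :
    ∫ r in (0:ℝ)..1, r ^ (x - 1) * (1 - r) ^ m * ∑ i ∈ Finset.range (N + 1), c i * r ^ i =
      ∑ i ∈ Finset.range (N + 1), c i * beta (x + i) (m + 1) := by
  have hx' (i : ℕ) : 0 < x + i := by positivity
  simp_rw [← integral_rpow_mul_one_sub_pow (hx' _), ← intervalIntegral.integral_const_mul]
  rw [← intervalIntegral.integral_finsetSum fun i _ =>
    (intervalIntegrable_rpow_mul_one_sub_pow (hx' i) m).const_mul (c i)]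
  refine intervalIntegral.integral_congr_ae (Filter.Eventually.of_forall fun r hr => ?_)
  rw [Set.uIoc_of_le zero_le_one] at hr
  simp_rw [Finset.mul_sum, add_sub_right_comm x, rpow_add_natCast hr.1.ne']
  exact Finset.sum_congr rfl fun i _ => by ring

lemma natCast_mul_abs_sub_le {a : ℝ} (ha : 0 < a) (m i : ℕ) :
    m * |m * beta (a + i + 1) (m + 1) - a * beta (a + i) (m + 1)| ≤
      (a + 2 * i + 1) * a * beta a (m + 1) := by
  have hy : (0 : ℝ) < m + 1 := by positivity
  have hBi := beta_pos (α := a + i) (by positivity) hy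
  have hBi₁ := beta_pos (α := a + i + 1) (by positivity) hy
  have hB₁ := beta_pos (α := a + 1) (by positivity) hy
  have hshift : beta (a + i + 1) (m + 1) ≤ beta (a + 1) (m + 1) := by
    rw [add_right_comm]
    exact beta_add_natCast_left_le (by positivity) hy i
  have hshift' : i * beta (a + i) (m + 1) ≤ i * beta (a + 1) (m + 1) := by
    cases i with
    | zero => simp
    | succ k =>
      gcongr
      rw [Nat.cast_succ, ← add_assoc, add_right_comm]
      exact beta_add_natCast_left_le (by positivity) hy k
  have hdecay : m * beta (a + 1) (m + 1) ≤ a * beta a (m + 1) := by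
    nlinarith [add_mul_beta_add_one_left ha hy]
  calc (m : ℝ) * |m * beta (a + i + 1) (m + 1) - a * beta (a + i) (m + 1)|
      = m * |i * beta (a + i) (m + 1) - (a + i + 1) * beta (a + i + 1) (m + 1)| := by
        congr 2
        linear_combination add_mul_beta_add_one_left (x := a + i) (by positivity) hy
    _ ≤ m * (i * beta (a + i) (m + 1) + (a + i + 1) * beta (a + i + 1) (m + 1)) := by
        gcongr
        refine (abs_sub _ _).trans_eq ?_
        rw [abs_of_nonneg (by positivity), abs_of_nonneg (by positivity)]
    _ ≤ m * ((a + 2 * i + 1) * beta (a + 1) (m + 1)) := by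
        gcongr
        nlinarith
    _ ≤ (a + 2 * i + 1) * (a * beta a (m + 1)) := by
        rw [mul_left_comm]
        gcongr
    _ = (a + 2 * i + 1) * a * beta a (m + 1) := by ring

lemma natCast_mul_abs_sub_sum_le {a : ℝ} (ha : 0 < a) (m N : ℕ) (c : ℕ → ℝ)
    (hc : ∀ i ≤ N, 0 ≤ c i) :
    m * |m * ∑ i ∈ Finset.range (N + 1), c i * beta (a + 1 + i) (m + 1) -
        a * ∑ i ∈ Finset.range (N + 1), c i * beta (a + i) (m + 1)| ≤
      (∑ i ∈ Finset.range (N + 1), c i * (a + 2 * i + 1)) * a * beta a (m + 1) := by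
  simp_rw [Finset.mul_sum, ← Finset.sum_sub_distrib, Finset.sum_mul]
  refine (mul_le_mul_of_nonneg_left (Finset.abs_sum_le_sum_abs _ _) m.cast_nonneg).trans ?_
  rw [Finset.mul_sum]
  refine Finset.sum_le_sum fun i hi => ?_
  have hci := hc i (Finset.mem_range_succ_iff.mp hi)
  calc (m : ℝ) * |m * (c i * beta (a + 1 + i) (m + 1)) - a * (c i * beta (a + i) (m + 1))|
      = c i * (m * |m * beta (a + i + 1) (m + 1) - a * beta (a + i) (m + 1)|) := by
        rw [add_right_comm, mul_left_comm (m : ℝ) (c i), mul_left_comm a (c i), ← mul_sub,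
          abs_mul, abs_of_nonneg hci]
        ring
    _ ≤ c i * ((a + 2 * i + 1) * a * beta a (m + 1)) :=
        mul_le_mul_of_nonneg_left (natCast_mul_abs_sub_le ha m i) hci
    _ = c i * (a + 2 * i + 1) * a * beta a (m + 1) := by ring

lemma abs_div_sub_div_le_of_mul_abs_sub_le {P Q D K a c₀ m : ℝ} (hm : 0 < m) (hc₀ : 0 < c₀)
    (hD : 0 < D) (hQ : c₀ * D ≤ Q) (h : m * |m * P - a * Q| ≤ K * D) :
    |P / Q - a / m| ≤ K / c₀ / m ^ 2 := by
  have hQpos : 0 < Q := (mul_pos hc₀ hD).trans_le hQ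
  have hK : 0 ≤ K := nonneg_of_mul_nonneg_left ((by positivity : (0 : ℝ) ≤ _).trans h) hD
  rw [div_sub_div _ _ hQpos.ne' hm.ne', abs_div, abs_of_pos (mul_pos hQpos hm),
    div_le_div_iff₀ (by positivity) (by positivity), div_mul_eq_mul_div, le_div_iff₀ hc₀]
  calc |P * m - Q * a| * m ^ 2 * c₀ = m * c₀ * (m * |m * P - a * Q|) := by
        rw [show P * m - Q * a = m * P - a * Q by ring]
        ring
    _ ≤ m * c₀ * (K * D) := by gcongr
    _ = m * K * (c₀ * D) := by ring
    _ ≤ m * K * Q := by gcongr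
    _ = K * (Q * m) := by ring

/-- Appendix B of the paper: for a risk density proportional to `r^(a−1) Σ_{i=0}^N c_i r^i`
with `c_i ≥ 0` and `c_0 > 0`, the expected ERM risk satisfies `R(m) = a/m + O(1/m²)`. -/
theorem erm_risk_a_over_m (a : ℝ) (ha : 0 < a) (N : ℕ) (c : ℕ → ℝ)
    (hc : ∀ i ≤ N, 0 ≤ c i) (hc0 : 0 < c 0) :
    ∃ C : ℝ, ∀ m : ℕ, 1 ≤ m →
      |(∫ r in (0:ℝ)..1, r ^ a * (1 - r) ^ m * (∑ i ∈ Finset.range (N + 1), c i * r ^ i)) /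
          (∫ r in (0:ℝ)..1, r ^ (a - 1) * (1 - r) ^ m *
            (∑ i ∈ Finset.range (N + 1), c i * r ^ i)) - a / m| ≤ C / (m : ℝ) ^ 2 := by
  refine ⟨(∑ i ∈ Finset.range (N + 1), c i * (a + 2 * i + 1)) * a / c 0, fun m hm => ?_⟩
  have hy : (0 : ℝ) < m + 1 := by positivity
  have hdenom : c 0 * beta a (m + 1) ≤ ∑ i ∈ Finset.range (N + 1), c i * beta (a + i) (m + 1) := by
    simpa using Finset.single_le_sum (f := fun i => c i * beta (a + i) (m + 1))
      (fun i hi => mul_nonneg (hc i (Finset.mem_range_succ_iff.mp hi))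
        (beta_pos (by positivity) hy).le) (Finset.mem_range.mpr N.succ_pos)
  have hnum := integral_rpow_mul_one_sub_pow_mul_sum (x := a + 1) (by linarith) m N c
  rw [add_sub_cancel_right] at hnum
  rw [hnum, integral_rpow_mul_one_sub_pow_mul_sum ha]
  exact abs_div_sub_div_le_of_mul_abs_sub_le (by exact_mod_cast hm) hc0 (beta_pos ha hy) hdenom
    (natCast_mul_abs_sub_sum_le ha m N c hc)
end

section
/- Let H ≥ 1 be a natural number and let (r_1, χ_1), …, (r_H, χ_H) be i.i.d. random pairs on a probability space, where each χ_i takes values in {0, 1} and each r_i takes values in [0, 1]. Let M₀ = P(χ_1 = 1) and M₁ = E[r_1 χ_1], and suppose M₀ > 0. Then E[ (Σ_{i=1}^H r_i χ_i) / (Σ_{i=1}^H χ_i) · 1{Σ_{i=1}^H χ_i ≥ 1} ] = (M₁/M₀) · (1 − (1 − M₀)^H). -/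
open MeasureTheory ProbabilityTheory Finset

/-! When `χ i = 1`, the sum `∑ j, χ j` equals `1 + ∑ j ≠ i, χ j`, so the ERM risk is
`∑ i, r i * χ i / (1 + ∑ j ≠ i, χ j)` (both sides vanish when no `χ i` is `1`). Each summand
is a function of the `i`-th pair times a function of the others, so by independence its
expectation is `M₁ * e i` with `e i = E[(1 + ∑ j ≠ i, χ j)⁻¹]`. The same computation with
`r ≡ 1` gives `∑ i, M₀ * e i = P(∃ i, χ i = 1) = 1 - (1 - M₀) ^ H`, which determines
`∑ i, e i` without evaluating any binomial sum. -/

section ZeroOneSums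

variable {ι : Type*} [Fintype ι] {x : ι → ℝ}

theorem sum_mul_div_one_add_sum_erase [DecidableEq ι] (hx : ∀ i, x i = 0 ∨ x i = 1)
    (y : ι → ℝ) :
    ∑ i, y i * x i / (1 + ∑ j ∈ univ.erase i, x j) = (∑ i, y i * x i) / ∑ i, x i := by
  rw [sum_div]
  refine sum_congr rfl fun i _ => ?_
  rcases hx i with h | h
  · simp [h]
  · rw [← h, add_sum_erase _ _ (mem_univ i)]

theorem eq_zero_of_not_one_le_sum (hx : ∀ i, x i = 0 ∨ x i = 1) (h : ¬ 1 ≤ ∑ i, x i)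
    (i : ι) : x i = 0 := by
  have hx0 : ∀ j, 0 ≤ x j := fun j => by rcases hx j with h | h <;> simp [h]
  refine (hx i).resolve_right fun h1 => h ?_
  exact h1 ▸ single_le_sum (fun j _ => hx0 j) (mem_univ i)

theorem ite_one_le_sum_div_sum (hx : ∀ i, x i = 0 ∨ x i = 1) (y : ι → ℝ) :
    (if 1 ≤ ∑ i, x i then (∑ i, y i * x i) / ∑ i, x i else 0)
      = (∑ i, y i * x i) / ∑ i, x i := by
  split_ifs with h
  · rfl
  · simp [eq_zero_of_not_one_le_sum hx h]

-- Through `0 / 0 = 0`, the left-hand side is the indicator of `∃ i, x i = 1`.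
theorem sum_div_sum_self (hx : ∀ i, x i = 0 ∨ x i = 1) :
    (∑ i, x i) / ∑ i, x i = 1 - ∏ i, (1 - x i) := by
  by_cases h : 1 ≤ ∑ i, x i
  · obtain ⟨i, hi⟩ : ∃ i, x i = 1 := by
      by_contra! h'
      exact absurd h (by simp [fun i => (hx i).resolve_right (h' i)])
    rw [div_self (by linarith), prod_eq_zero (mem_univ i) (by simp [hi]), sub_zero]
  · simp [eq_zero_of_not_one_le_sum hx h]

end ZeroOneSums

theorem MeasureTheory.integral_eq_measureReal_of_zero_or_one {Ω : Type*} [MeasurableSpace Ω]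
    {P : Measure Ω} [IsFiniteMeasure P] {f : Ω → ℝ} (hf : Measurable f)
    (h01 : ∀ ω, f ω = 0 ∨ f ω = 1) :
    ∫ ω, f ω ∂P = P.real {ω | f ω = 1} := by
  have hind : f = {ω | f ω = 1}.indicator 1 := by
    ext ω; rcases h01 ω with h | h <;> simp [h]
  conv_lhs => rw [hind]
  exact integral_indicator_one (hf (measurableSet_singleton 1))

theorem MeasureTheory.Integrable.of_zero_or_one {Ω : Type*} [MeasurableSpace Ω]
    {P : Measure Ω} [IsFiniteMeasure P] {f : Ω → ℝ} (hf : Measurable f)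
    (h01 : ∀ ω, f ω = 0 ∨ f ω = 1) : Integrable f P :=
  .of_mem_Icc 0 1 hf.aemeasurable (ae_of_all _ fun ω => by rcases h01 ω with h | h <;> simp [h])

namespace ProbabilityTheory

variable {Ω β ι : Type*} [MeasurableSpace Ω] [MeasurableSpace β] {P : Measure Ω}
  {X : ι → Ω → β}

theorem iIndepFun.integral_comp_mul_comp_sum [DecidableEq ι] (hX : ∀ i, Measurable (X i))
    (hind : iIndepFun X P) {φ g : β → ℝ} {G : ℝ → ℝ} (hφ : Measurable φ) (hg : Measurable g)
    (hG : Measurable G) {i : ι} {s : Finset ι} (hi : i ∉ s) :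
    ∫ ω, φ (X i ω) * G (∑ j ∈ s, g (X j ω)) ∂P
      = (∫ ω, φ (X i ω) ∂P) * ∫ ω, G (∑ j ∈ s, g (X j ω)) ∂P := by
  have hφ' : Measurable fun y : ({i} : Finset ι) → β => φ (y ⟨i, mem_singleton_self i⟩) :=
    hφ.comp (measurable_pi_apply _)
  have hG' : Measurable fun y : s → β => G (∑ j, g (y j)) :=
    hG.comp (Finset.measurable_sum _ fun j _ => hg.comp (measurable_pi_apply j))
  have h := (hind.indepFun_finset {i} s (disjoint_singleton_left.mpr hi) hX)
    |>.integral_fun_comp_mul_comp (measurable_pi_lambda _ fun _ => hX _).aemeasurable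
      (measurable_pi_lambda _ fun _ => hX _).aemeasurable
      hφ'.aestronglyMeasurable hG'.aestronglyMeasurable
  simp only [← sum_coe_sort s]
  exact h

theorem iIndepFun.integral_sum_mul_div_sum [Fintype ι] [DecidableEq ι]
    (hX : ∀ i, Measurable (X i)) (hind : iIndepFun X P) {φ c : β → ℝ} (hφ : Measurable φ)
    (hc : Measurable c) (hc01 : ∀ i ω, c (X i ω) = 0 ∨ c (X i ω) = 1)
    (hint : ∀ i, Integrable (fun ω => φ (X i ω) * c (X i ω)) P) :
    ∫ ω, (∑ i, φ (X i ω) * c (X i ω)) / ∑ i, c (X i ω) ∂P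
      = ∑ i, (∫ ω, φ (X i ω) * c (X i ω) ∂P)
          * ∫ ω, (1 + ∑ j ∈ univ.erase i, c (X j ω))⁻¹ ∂P := by
  have hinv_le : ∀ i ω, ‖(1 + ∑ j ∈ univ.erase i, c (X j ω))⁻¹‖ ≤ 1 := fun i ω => by
    have : 0 ≤ ∑ j ∈ univ.erase i, c (X j ω) :=
      sum_nonneg fun j _ => by rcases hc01 j ω with h | h <;> simp [h]
    rw [Real.norm_eq_abs, abs_of_pos (by positivity)]
    exact inv_le_one_of_one_le₀ (by linarith)
  have hG : Measurable fun t : ℝ => (1 + t)⁻¹ := (measurable_const.add measurable_id).inv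
  simp_rw [← sum_mul_div_one_add_sum_erase (hc01 · _), div_eq_mul_inv]
  rw [integral_finsetSum]
  · exact sum_congr rfl fun i _ =>
      hind.integral_comp_mul_comp_sum hX (hφ.mul hc) hc hG (notMem_erase i univ)
  · intro i _
    refine (hint i).mul_bdd ?_ (ae_of_all _ (hinv_le i))
    exact (hG.comp (Finset.measurable_sum _ fun j _ => hc.comp (hX j))).aestronglyMeasurable

theorem iIndepFun.integral_sum_div_sum_self [Fintype ι] [IsProbabilityMeasure P]
    {χ : ι → Ω → ℝ} (hχm : ∀ i, Measurable (χ i)) (hind : iIndepFun χ P)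
    (hχ01 : ∀ i ω, χ i ω = 0 ∨ χ i ω = 1) {p : ℝ} (hp : ∀ i, ∫ ω, χ i ω ∂P = p) :
    ∫ ω, (∑ i, χ i ω) / ∑ i, χ i ω ∂P = 1 - (1 - p) ^ Fintype.card ι := by
  have hmem : ∀ i ω, 1 - χ i ω ∈ Set.Icc (0 : ℝ) 1 := fun i ω => by
    rcases hχ01 i ω with h | h <;> simp [h]
  have hnone : ∫ ω, ∏ i, (1 - χ i ω) ∂P = (1 - p) ^ Fintype.card ι := by
    have hind' : iIndepFun (fun i ω => 1 - χ i ω) P :=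
      hind.comp (fun _ x => 1 - x) fun _ => measurable_const.sub measurable_id
    rw [hind'.integral_fun_prod_eq_prod_integral
      fun i => (measurable_const.sub (hχm i)).aestronglyMeasurable]
    simp [integral_sub (integrable_const 1) (Integrable.of_zero_or_one (hχm _) (hχ01 _)), hp]
  have hnone_int : Integrable (fun ω => ∏ i, (1 - χ i ω)) P :=
    .of_mem_Icc 0 1
      (Finset.measurable_prod _ fun i _ => measurable_const.sub (hχm i)).aemeasurable
      (ae_of_all _ fun ω => ⟨prod_nonneg fun i _ => (hmem i ω).1,
        prod_le_one (fun i _ => (hmem i ω).1) fun i _ => (hmem i ω).2⟩)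
  rw [integral_congr_ae (ae_of_all _ fun ω => sum_div_sum_self (hχ01 · ω)),
    integral_sub (integrable_const 1) hnone_int, hnone, integral_const, probReal_univ, one_smul]

end ProbabilityTheory

/-- Exact expected ERM risk in the realisable case: for i.i.d. pairs `(r_i, χ_i)` with
`χ_i ∈ {0, 1}`, `r_i ∈ [0, 1]`, `M₀ = P(χ₁ = 1) > 0` and `M₁ = E[r₁ χ₁]`, the expected value of
`(Σ r_i χ_i)/(Σ χ_i)` on the event `Σ χ_i ≥ 1` equals `(M₁/M₀)(1 − (1 − M₀)^H)`. -/
theorem expected_erm_risk {Ω : Type*} [MeasurableSpace Ω] (P : Measure Ω)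
    [IsProbabilityMeasure P] (H : ℕ) (hH : 1 ≤ H) (r χ : Fin H → Ω → ℝ)
    (hr : ∀ i ω, r i ω ∈ Set.Icc (0:ℝ) 1)
    (hχ : ∀ i ω, χ i ω = 0 ∨ χ i ω = 1)
    (hmeas : ∀ i, Measurable fun ω => (r i ω, χ i ω))
    (hindep : iIndepFun (fun i ω => (r i ω, χ i ω)) P)
    (hident : ∀ i j, IdentDistrib (fun ω => (r i ω, χ i ω)) (fun ω => (r j ω, χ j ω)) P P)
    (M0 M1 : ℝ)
    (hM0 : M0 = (P {ω | χ ⟨0, hH⟩ ω = 1}).toReal)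
    (hM1 : M1 = ∫ ω, r ⟨0, hH⟩ ω * χ ⟨0, hH⟩ ω ∂P)
    (hM0pos : 0 < M0) :
    ∫ ω, (if 1 ≤ ∑ i, χ i ω then (∑ i, r i ω * χ i ω) / (∑ i, χ i ω) else 0) ∂P =
      M1 / M0 * (1 - (1 - M0) ^ H) := by
  have hχm : ∀ i, Measurable (χ i) := fun i => measurable_snd.comp (hmeas i)
  have hEχ : ∀ i, ∫ ω, χ i ω ∂P = M0 := fun i => by
    rw [hM0, ← measureReal_def, ← integral_eq_measureReal_of_zero_or_one (hχm _) (hχ _)]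
    exact ((hident i ⟨0, hH⟩).comp measurable_snd).integral_eq
  have hErχ : ∀ i, ∫ ω, r i ω * χ i ω ∂P = M1 := fun i => by
    rw [hM1]
    exact ((hident i ⟨0, hH⟩).comp (measurable_fst.mul measurable_snd)).integral_eq
  have hint : ∀ i, Integrable (fun ω => r i ω * χ i ω) P := fun i =>
    .of_mem_Icc 0 1 ((measurable_fst.mul measurable_snd).comp (hmeas i)).aemeasurable
      (ae_of_all _ fun ω => by rcases hχ i ω with h | h <;> simp [h, hr i ω])
  set e : Fin H → ℝ := fun i => ∫ ω, (1 + ∑ j ∈ univ.erase i, χ j ω)⁻¹ ∂P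
  have hrisk : ∫ ω, (if 1 ≤ ∑ i, χ i ω then (∑ i, r i ω * χ i ω) / (∑ i, χ i ω) else 0) ∂P
      = ∑ i, M1 * e i := by
    have h := hindep.integral_sum_mul_div_sum hmeas measurable_fst measurable_snd hχ hint
    simp only [hErχ] at h
    simp_rw [ite_one_le_sum_div_sum (hχ · _)]
    exact h
  have hcover : ∑ i, M0 * e i = 1 - (1 - M0) ^ H := by
    have h := hindep.integral_sum_mul_div_sum (φ := fun _ => 1) hmeas measurable_const
      measurable_snd hχ fun i => by simpa using Integrable.of_zero_or_one (hχm i) (hχ i)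
    simp only [one_mul, hEχ] at h
    have hχind : iIndepFun χ P := hindep.comp (fun _ => Prod.snd) fun _ => measurable_snd
    rw [← h, hχind.integral_sum_div_sum_self hχm hχ hEχ, Fintype.card_fin]
  calc _ = ∑ i, M1 * e i := hrisk
    _ = M1 / M0 * ∑ i, M0 * e i := by
      rw [mul_sum]
      exact sum_congr rfl fun i _ => by field_simp
    _ = M1 / M0 * (1 - (1 - M0) ^ H) := by rw [hcover]
end

section
/- Let p ≥ 2 be a natural number. For each natural number m define R(m) = (∫_0^1 r (1−r)^m (sin(π r))^(p−2) dr) / (∫_0^1 (1−r)^m (sin(π r))^(p−2) dr). Then m · R(m) → p − 1 as m → ∞. -/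
/-!
Laplace's method at the endpoint `r = 0`: after the substitution `r = t / m`, the factor
`(1 - t / m) ^ m` tends to `exp (-t)` and is dominated by it, so if `f r ~ c r ^ k` as
`r → 0⁺` then `m ^ (k + 1) ∫₀¹ (1 - r) ^ m f r dr → c ∫₀^∞ e⁻ᵗ tᵏ dt = c k!`. As
`sin (π r) ^ q ~ π ^ q r ^ q`, the numerator and denominator of `R(m)` (with `q = p - 2`) are
asymptotic to `π ^ q (q + 1)! / m ^ (q + 2)` and `π ^ q q! / m ^ (q + 1)`, so `m R(m) → q + 1`.
-/

open Real MeasureTheory Filter Set Topology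
open scoped Nat

theorem integral_exp_neg_mul_pow_Ioi (k : ℕ) :
    ∫ t in Ioi (0:ℝ), exp (-t) * t ^ k = k ! := by
  have h := Gamma_eq_integral (s := (k:ℝ) + 1) (by positivity)
  simp only [add_sub_cancel_right, rpow_natCast, Gamma_nat_eq_factorial] at h
  exact h.symm

theorem integrableOn_exp_neg_mul_pow_Ioi (k : ℕ) :
    IntegrableOn (fun t : ℝ => exp (-t) * t ^ k) (Ioi 0) := by
  have h := GammaIntegral_convergent (s := (k:ℝ) + 1) (by positivity)
  simpa only [add_sub_cancel_right, rpow_natCast] using h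

theorem tendsto_sin_pi_mul_div_nhdsGT_zero :
    Tendsto (fun r : ℝ => sin (π * r) / r) (𝓝[>] 0) (𝓝 π) := by
  have hsinc : Tendsto (fun r : ℝ => π * sinc (π * r)) (𝓝 0) (𝓝 π) := by
    have hcont : Continuous fun r : ℝ => π * sinc (π * r) := by fun_prop
    simpa using hcont.tendsto 0
  refine (hsinc.mono_left nhdsWithin_le_nhds).congr' ?_
  filter_upwards [self_mem_nhdsWithin] with r (hr : 0 < r)
  rw [sinc_of_ne_zero (by positivity)]
  field_simp

section Laplace

variable {f : ℝ → ℝ} {k : ℕ}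

theorem pow_mul_integral_one_sub_pow_mul_eq_integral_Ioi {m : ℕ} (hm : m ≠ 0) :
    (m:ℝ) ^ (k+1) * ∫ r in (0:ℝ)..1, (1-r) ^ m * f r =
      ∫ t in Ioi 0, (Ioc 0 (m:ℝ)).indicator (fun t => (1 - t/m) ^ m * (m ^ k * f (t/m))) t := by
  have hm0 : (0:ℝ) < m := by positivity
  rw [setIntegral_indicator measurableSet_Ioc, inter_eq_right.2 Ioc_subset_Ioi_self,
    ← intervalIntegral.integral_of_le hm0.le]
  have hsub := intervalIntegral.integral_comp_div (fun r => (1-r) ^ m * f r) hm0.ne'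
    (a := 0) (b := m)
  simp only [zero_div, div_self hm0.ne', smul_eq_mul] at hsub
  simp_rw [mul_left_comm _ ((m:ℝ) ^ k), intervalIntegral.integral_const_mul, hsub]
  ring

theorem norm_indicator_one_sub_div_pow_mul_le {C : ℝ}
    (hbound : ∀ r ∈ Ioc (0:ℝ) 1, |f r| ≤ C * r ^ k) (m : ℕ) {t : ℝ} (ht : 0 < t) :
    ‖(Ioc 0 (m:ℝ)).indicator (fun t => (1 - t/m) ^ m * (m ^ k * f (t/m))) t‖ ≤
      exp (-t) * (C * t ^ k) := by
  have hC : 0 ≤ C := by simpa using (abs_nonneg (f 1)).trans (hbound 1 ⟨one_pos, le_rfl⟩)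
  by_cases htm : t ∈ Ioc 0 (m:ℝ)
  · have hm0 : (0:ℝ) < m := ht.trans_le htm.2
    have hdiv : t / m ∈ Ioc (0:ℝ) 1 := ⟨by positivity, (div_le_one hm0).2 htm.2⟩
    have hexp : 0 ≤ (1 - t/m) ^ m ∧ (1 - t/m) ^ m ≤ exp (-t) :=
      ⟨pow_nonneg (sub_nonneg.2 hdiv.2) m, one_sub_div_pow_le_exp_neg htm.2⟩
    have hf : (m:ℝ) ^ k * |f (t/m)| ≤ C * t ^ k := by
      calc (m:ℝ) ^ k * |f (t/m)| ≤ (m:ℝ) ^ k * (C * (t/m) ^ k) := by gcongr; exact hbound _ hdiv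
        _ = C * t ^ k := by rw [div_pow]; field_simp
    rw [indicator_of_mem htm, norm_mul, norm_mul, Real.norm_of_nonneg hexp.1,
      Real.norm_of_nonneg (by positivity), Real.norm_eq_abs]
    exact mul_le_mul hexp.2 hf (by positivity) (exp_pos _).le
  · rw [indicator_of_notMem htm, norm_zero]
    positivity

theorem tendsto_pow_mul_apply_div_natCast {c : ℝ}
    (hlim : Tendsto (fun r => f r / r ^ k) (𝓝[>] 0) (𝓝 c)) {t : ℝ} (ht : 0 < t) :
    Tendsto (fun m : ℕ => (m:ℝ) ^ k * f (t/m)) atTop (𝓝 (c * t ^ k)) := by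
  have hdiv : Tendsto (fun m : ℕ => t / m) atTop (𝓝[>] 0) :=
    tendsto_nhdsWithin_iff.2 ⟨tendsto_const_div_atTop_nhds_zero_nat t,
      (eventually_gt_atTop 0).mono fun m (hm : 0 < m) => by simp only [mem_Ioi]; positivity⟩
  refine ((hlim.comp hdiv).mul_const (t ^ k)).congr' ?_
  filter_upwards [eventually_gt_atTop 0] with m hm
  have hm0 : (0:ℝ) < m := by positivity
  simp only [Function.comp_apply, div_pow]
  field_simp

theorem tendsto_pow_mul_integral_one_sub_pow_mul {C c : ℝ} (hf : Measurable f)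
    (hbound : ∀ r ∈ Ioc (0:ℝ) 1, |f r| ≤ C * r ^ k)
    (hlim : Tendsto (fun r => f r / r ^ k) (𝓝[>] 0) (𝓝 c)) :
    Tendsto (fun m : ℕ => (m:ℝ) ^ (k+1) * ∫ r in (0:ℝ)..1, (1-r) ^ m * f r) atTop
      (𝓝 (c * k !)) := by
  have hDCT : Tendsto (fun m : ℕ => ∫ t in Ioi 0,
        (Ioc 0 (m:ℝ)).indicator (fun t => (1 - t/m) ^ m * (m ^ k * f (t/m))) t) atTop
      (𝓝 (∫ t in Ioi 0, exp (-t) * (c * t ^ k))) := by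
    refine tendsto_integral_of_dominated_convergence (fun t => exp (-t) * (C * t ^ k))
      (fun m => ?_) ?_ (fun m => ?_) ?_
    · exact ((by fun_prop : Measurable fun t : ℝ => (1 - t/m) ^ m * (m ^ k * f (t/m))).indicator
        measurableSet_Ioc).aestronglyMeasurable
    · exact (Integrable.const_mul (integrableOn_exp_neg_mul_pow_Ioi k) C).congr
        (.of_forall fun t => by ring)
    · exact (ae_restrict_iff' measurableSet_Ioi).2 (.of_forall fun t ht =>
        norm_indicator_one_sub_div_pow_mul_le hbound m ht)
    · refine (ae_restrict_iff' measurableSet_Ioi).2 (.of_forall fun t (ht : 0 < t) => ?_)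
      have hexp : Tendsto (fun m : ℕ => (1 - t/m) ^ m) atTop (𝓝 (exp (-t))) := by
        simpa only [neg_div, sub_eq_add_neg] using tendsto_one_add_div_pow_exp (-t)
      refine ((hexp.mul (tendsto_pow_mul_apply_div_natCast hlim ht))).congr' ?_
      filter_upwards [(tendsto_natCast_atTop_atTop (R := ℝ)).eventually_ge_atTop t] with m hm
      rw [indicator_of_mem (show t ∈ Ioc (0:ℝ) m from ⟨ht, hm⟩)]
  have hval : ∫ t in Ioi (0:ℝ), exp (-t) * (c * t ^ k) = c * k ! := by
    simp_rw [mul_left_comm _ c, integral_const_mul, integral_exp_neg_mul_pow_Ioi]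
  rw [hval] at hDCT
  refine hDCT.congr' ?_
  filter_upwards [eventually_ne_atTop 0] with m hm
  exact (pow_mul_integral_one_sub_pow_mul_eq_integral_Ioi hm).symm

end Laplace

theorem abs_sin_pi_mul_pow_le {r : ℝ} (hr : 0 ≤ r) (q : ℕ) :
    |sin (π * r) ^ q| ≤ π ^ q * r ^ q := by
  rw [abs_pow, ← mul_pow]
  gcongr
  simpa [abs_of_nonneg (by positivity : 0 ≤ π * r)] using abs_sin_le_abs (x := π * r)

theorem tendsto_pow_mul_integral_one_sub_pow_mul_pow_mul_sin_pi_mul_pow (j q : ℕ) :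
    Tendsto (fun m : ℕ => (m:ℝ) ^ (j + q + 1) *
        ∫ r in (0:ℝ)..1, (1 - r) ^ m * (r ^ j * sin (π * r) ^ q))
      atTop (𝓝 (π ^ q * (j + q)!)) := by
  refine tendsto_pow_mul_integral_one_sub_pow_mul (C := π ^ q) (by fun_prop) (fun r hr => ?_) ?_
  · calc |r ^ j * sin (π * r) ^ q| = r ^ j * |sin (π * r) ^ q| := by
          rw [abs_mul, abs_of_nonneg (pow_nonneg hr.1.le j)]
      _ ≤ r ^ j * (π ^ q * r ^ q) :=
          mul_le_mul_of_nonneg_left (abs_sin_pi_mul_pow_le hr.1.le q) (pow_nonneg hr.1.le j)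
      _ = π ^ q * r ^ (j + q) := by ring
  · have hsin : Tendsto (fun r => sin (π * r) ^ q / r ^ q) (𝓝[>] 0) (𝓝 (π ^ q)) := by
      simpa only [div_pow] using tendsto_sin_pi_mul_div_nhdsGT_zero.pow q
    refine hsin.congr' ?_
    filter_upwards [self_mem_nhdsWithin] with r (hr : 0 < r)
    rw [pow_add, mul_div_mul_left _ _ (pow_ne_zero j hr.ne')]

theorem mul_div_eq_pow_succ_mul_div_pow_mul {K : Type*} [Field K] {x : K} (hx : x ≠ 0) (n : ℕ)
    (a b : K) :
    x * (a / b) = x ^ (n + 1) * a / (x ^ n * b) := by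
  rw [pow_succ, mul_comm _ x, mul_assoc, mul_div_assoc, mul_div_mul_left _ _ (pow_ne_zero n hx)]

/-- Asymptotic expected ERM risk of the realisable perceptron with `p` features (annealed
approximation): with risk density proportional to `sin^(p−2)(π r)`, `m · R(m) → p − 1`. -/
theorem perceptron_erm_asymptotic (p : ℕ) (hp : 2 ≤ p) :
    Tendsto (fun m : ℕ => (m : ℝ) *
        ((∫ r in (0:ℝ)..1, r * (1 - r) ^ m * Real.sin (π * r) ^ (p - 2)) /
          (∫ r in (0:ℝ)..1, (1 - r) ^ m * Real.sin (π * r) ^ (p - 2))))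
      atTop (nhds ((p : ℝ) - 1)) := by
  obtain ⟨q, rfl⟩ : ∃ q, p = q + 2 := ⟨p - 2, by omega⟩
  have hden := tendsto_pow_mul_integral_one_sub_pow_mul_pow_mul_sin_pi_mul_pow 0 q
  have hnum := tendsto_pow_mul_integral_one_sub_pow_mul_pow_mul_sin_pi_mul_pow 1 q
  have hvalue : π ^ q * ((1 + q)! : ℝ) / (π ^ q * (0 + q)!) = ((q + 2 : ℕ) : ℝ) - 1 := by
    push_cast [add_comm 1 q, zero_add, Nat.factorial_succ]
    field_simp
    ring
  rw [← hvalue]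
  refine (hnum.div hden (by positivity)).congr' ?_
  filter_upwards [eventually_ne_atTop 0] with m hm
  have hnum_integrand : ∫ r in (0:ℝ)..1, (1 - r) ^ m * (r ^ 1 * sin (π * r) ^ q) =
      ∫ r in (0:ℝ)..1, r * (1 - r) ^ m * sin (π * r) ^ q :=
    intervalIntegral.integral_congr fun r _ => by ring
  simp only [Pi.div_apply, Nat.add_sub_cancel, pow_zero, one_mul, zero_add, hnum_integrand]
  rw [add_comm 1 q, mul_div_eq_pow_succ_mul_div_pow_mul (Nat.cast_ne_zero.2 hm) (q + 1)]
end
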